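/- arXiv:2305.05565 — 2 statements merged into one kernel-verified Lean document; each statement's English description precedes it below -/
import Mathlib

section
/- Let A ∈ {0,1}^{m×n} be a random matrix with i.i.d. entries A_{ij} ~ Bernoulli(p), p ∈ (0,1]. Then for every k ∈ {0,1,…,n}, P(val_IP ≤ k) ≤ C(n,k)·(1 − (1−p)^k)^m, where val_IP is the minimum of ‖x‖₁ over x ∈ {0,1}^n with Ax ≥ 1 entrywise (val_IP := +∞ if no such x exists). -/
open Classical Finset
open scoped ENNReal

/-- Probability weight of a 0/1 matrix with i.i.d. Bernoulli(p) entries. -/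
noncomputable def mWeight (m n : ℕ) (p : ℝ) (ω : Fin m → Fin n → Bool) : ℝ :=
  ∏ i : Fin m, ∏ j : Fin n, if ω i j then p else 1 - p

/-- Probability of an event under the i.i.d. Bernoulli(p) matrix distribution. -/
noncomputable def mProb (m n : ℕ) (p : ℝ) (P : (Fin m → Fin n → Bool) → Prop) : ℝ :=
  ∑ ω : Fin m → Fin n → Bool, if P ω then mWeight m n p ω else 0

/-- Feasibility for the LP: `A x ≥ 1` entrywise. -/
def feasLP {m n : ℕ} (ω : Fin m → Fin n → Bool) (x : Fin n → ℝ) : Prop :=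
  ∀ i : Fin m, 1 ≤ ∑ j : Fin n, (if ω i j then (1 : ℝ) else 0) * x j

/-- Feasibility of a 0/1 vector. -/
def feasIP {m n : ℕ} (ω : Fin m → Fin n → Bool) (x : Fin n → Bool) : Prop :=
  feasLP ω fun j => if x j then (1 : ℝ) else 0

/-- The IP value: minimal number of ones of a feasible 0/1 vector (`⊤` if infeasible). -/
noncomputable def valIP {m n : ℕ} (ω : Fin m → Fin n → Bool) : ℝ≥0∞ :=
  sInf {v | ∃ x : Fin n → Bool, feasIP ω x ∧
    v = ((Finset.univ.filter fun j : Fin n => x j = true).card : ℝ≥0∞)}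

set_option maxHeartbeats 1000000 in
lemma sum_pi_prod {m : ℕ} {α : Type*} [Fintype α] (f : Fin m → α → ℝ) :
    ∑ ω : Fin m → α, ∏ i, f i (ω i) = ∏ i, ∑ a, f i a := by
  rw [Finset.prod_univ_sum, Fintype.piFinset_univ]

lemma row_miss {n : ℕ} (p : ℝ) (S : Finset (Fin n)) :
    ∑ g : Fin n → Bool, (if ∀ j ∈ S, g j = false then ∏ j, (if g j then p else 1-p) else 0)
      = (1-p) ^ S.card := by
  have key : ∀ g : Fin n → Bool,
      (if ∀ j ∈ S, g j = false then ∏ j, (if g j then p else 1-p) else 0)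
      = ∏ j, (fun (j : Fin n) (b : Bool) => if j ∈ S then (if b then 0 else 1-p) else (if b then p else 1-p)) j (g j) := by
    intro g
    by_cases h : ∀ j ∈ S, g j = false
    · simp only [if_pos h]
      apply Finset.prod_congr rfl
      intro j _
      by_cases hj : j ∈ S
      · simp [hj, h j hj]
      · simp [hj]
    · simp only [if_neg h]
      push_neg at h
      obtain ⟨j, hjS, hgj⟩ := h
      rw [eq_comm]
      apply Finset.prod_eq_zero (Finset.mem_univ j)
      simp [hjS, hgj]
  calc ∑ g : Fin n → Bool, (if ∀ j ∈ S, g j = false then ∏ j, (if g j then p else 1-p) else 0)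
      = ∑ g : Fin n → Bool, ∏ j, (fun (j : Fin n) (b : Bool) => if j ∈ S then (if b then 0 else 1-p) else (if b then p else 1-p)) j (g j) :=
        Finset.sum_congr rfl fun g _ => key g
    _ = ∏ j : Fin n, ∑ b : Bool, (fun (j : Fin n) (b : Bool) => if j ∈ S then (if b then 0 else 1-p) else (if b then p else 1-p)) j b :=
        sum_pi_prod (fun (j : Fin n) (b : Bool) => if j ∈ S then (if b then 0 else 1-p) else (if b then p else 1-p))
    _ = ∏ j : Fin n, (if j ∈ S then 1-p else 1) := by
        apply Finset.prod_congr rfl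
        intro j _
        by_cases hj : j ∈ S <;> simp [hj] <;> ring
    _ = (1-p) ^ S.card := by
        rw [Finset.prod_ite_mem, Finset.univ_inter, Finset.prod_const]

lemma row_hit {n : ℕ} (p : ℝ) (S : Finset (Fin n)) :
    ∑ g : Fin n → Bool, (if ∃ j ∈ S, g j = true then ∏ j, (if g j then p else 1-p) else 0)
      = 1 - (1-p) ^ S.card := by
  have total : ∑ g : Fin n → Bool, ∏ j, (if g j then p else 1-p) = 1 := by
    rw [show (∑ g : Fin n → Bool, ∏ j, (if g j then p else 1-p))
        = ∏ j : Fin n, ∑ b : Bool, (if b then p else 1-p) from sum_pi_prod (fun (_ : Fin n) (b : Bool) => if b then p else 1-p)]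
    simp
  have split : ∀ g : Fin n → Bool,
      (if ∃ j ∈ S, g j = true then ∏ j, (if g j then p else 1-p) else 0)
      = (∏ j, (if g j then p else 1-p))
        - (if ∀ j ∈ S, g j = false then ∏ j, (if g j then p else 1-p) else 0) := by
    intro g
    by_cases h : ∃ j ∈ S, g j = true
    · have h' : ¬ ∀ j ∈ S, g j = false := by
        obtain ⟨j, hj, hg⟩ := h; intro hall; simp [hall j hj] at hg
      simp [h, h']
    · have h' : ∀ j ∈ S, g j = false := by
        intro j hj
        by_contra hc
        exact h ⟨j, hj, by simpa using hc⟩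
      simp only [if_neg h, if_pos h']
      ring
  rw [Finset.sum_congr rfl fun g _ => split g, Finset.sum_sub_distrib, total, row_miss]

lemma mWeight_nonneg {m n : ℕ} {p : ℝ} (hp0 : 0 ≤ p) (hp1 : p ≤ 1)
    (ω : Fin m → Fin n → Bool) : 0 ≤ mWeight m n p ω := by
  apply Finset.prod_nonneg; intro i _
  apply Finset.prod_nonneg; intro j _
  by_cases h : ω i j <;> simp [h, hp0] <;> linarith

lemma mProb_mono {m n : ℕ} {p : ℝ} (hp0 : 0 ≤ p) (hp1 : p ≤ 1)
    {P Q : (Fin m → Fin n → Bool) → Prop} (h : ∀ ω, P ω → Q ω) :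
    mProb m n p P ≤ mProb m n p Q := by
  apply Finset.sum_le_sum
  intro ω _
  by_cases hP : P ω
  · simp [hP, h ω hP]
  · simp only [if_neg hP]
    by_cases hQ : Q ω
    · simp [hQ, mWeight_nonneg hp0 hp1]
    · simp [hQ]

lemma mProb_union {m n : ℕ} {p : ℝ} (hp0 : 0 ≤ p) (hp1 : p ≤ 1)
    (F : Finset (Finset (Fin n))) (Q : Finset (Fin n) → (Fin m → Fin n → Bool) → Prop) :
    mProb m n p (fun ω => ∃ S ∈ F, Q S ω) ≤ ∑ S ∈ F, mProb m n p (Q S) := by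
  unfold mProb
  rw [Finset.sum_comm]
  apply Finset.sum_le_sum
  intro ω _
  by_cases h : ∃ S ∈ F, Q S ω
  · obtain ⟨S₀, hS₀, hQ⟩ := h
    rw [if_pos ⟨S₀, hS₀, hQ⟩]
    calc mWeight m n p ω = if Q S₀ ω then mWeight m n p ω else 0 := by rw [if_pos hQ]
      _ ≤ ∑ S ∈ F, if Q S ω then mWeight m n p ω else 0 := by
          apply Finset.single_le_sum (fun S _ => ?_) hS₀
          by_cases hq : Q S ω
          · simp [hq, mWeight_nonneg hp0 hp1]
          · simp [hq]
  · rw [if_neg h]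
    apply Finset.sum_nonneg
    intro S _
    by_cases hq : Q S ω
    · simp [hq, mWeight_nonneg hp0 hp1]
    · simp [hq]

lemma feas_ind_iff {m n : ℕ} (ω : Fin m → Fin n → Bool) (S : Finset (Fin n)) :
    feasIP ω (fun j => decide (j ∈ S)) ↔ ∀ i : Fin m, ∃ j ∈ S, ω i j = true := by
  unfold feasIP feasLP
  apply forall_congr'
  intro i
  have hsum : ∑ j : Fin n, (if ω i j then (1:ℝ) else 0) * (if decide (j ∈ S) then (1:ℝ) else 0)
      = ((Finset.univ.filter fun j => ω i j = true ∧ j ∈ S).card : ℝ) := by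
    rw [← Finset.sum_boole]
    apply Finset.sum_congr rfl
    intro j _
    by_cases h1 : ω i j = true <;> by_cases h2 : j ∈ S <;> simp [h1, h2]
  rw [hsum]
  constructor
  · intro h
    have : 0 < (Finset.univ.filter fun j => ω i j = true ∧ j ∈ S).card := by
      by_contra hc
      push_neg at hc
      interval_cases h' : (Finset.univ.filter fun j => ω i j = true ∧ j ∈ S).card
      · simp [h'] at h; linarith
    obtain ⟨j, hj⟩ := Finset.card_pos.mp this
    simp only [Finset.mem_filter] at hj
    exact ⟨j, hj.2.2, hj.2.1⟩
  · intro ⟨j, hjS, hωj⟩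
    have : 1 ≤ (Finset.univ.filter fun j => ω i j = true ∧ j ∈ S).card := by
      apply Finset.card_pos.mpr
      exact ⟨j, by simp [hjS, hωj]⟩
    exact_mod_cast this

lemma prob_S {m n : ℕ} (p : ℝ) (S : Finset (Fin n)) :
    mProb m n p (fun ω => ∀ i : Fin m, ∃ j ∈ S, ω i j = true)
      = (1 - (1-p) ^ S.card) ^ m := by
  have step1 : mProb m n p (fun ω => ∀ i : Fin m, ∃ j ∈ S, ω i j = true)
      = ∑ ω : Fin m → Fin n → Bool, ∏ i : Fin m, (fun (_ : Fin m) (g : Fin n → Bool) =>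
          if ∃ j ∈ S, g j = true then ∏ j : Fin n, (if g j then p else 1-p) else 0) i (ω i) := by
    unfold mProb mWeight
    apply Finset.sum_congr rfl
    intro ω _
    by_cases h : ∀ i : Fin m, ∃ j ∈ S, ω i j = true
    · rw [if_pos h]
      exact Finset.prod_congr rfl fun i _ => (if_pos (h i)).symm
    · rw [if_neg h]
      push_neg at h
      obtain ⟨i, hi⟩ := h
      rw [eq_comm]
      apply Finset.prod_eq_zero (Finset.mem_univ i)
      have hni : ¬ ∃ j ∈ S, ω i j = true := by push_neg; exact hi
      exact if_neg hni
  rw [step1,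
    sum_pi_prod (fun (_ : Fin m) (g : Fin n → Bool) =>
      if ∃ j ∈ S, g j = true then ∏ j : Fin n, (if g j then p else 1-p) else 0)]
  rw [Finset.prod_congr rfl fun (i : Fin m) _ => row_hit p S, Finset.prod_const,
    Finset.card_univ, Fintype.card_fin]

lemma valIP_le_imp {m n : ℕ} (ω : Fin m → Fin n → Bool) (k : ℕ) (hk : k ≤ n)
    (h : valIP ω ≤ (k : ℝ≥0∞)) :
    ∃ S ∈ Finset.univ.powersetCard k, feasIP ω (fun j => decide (j ∈ S)) := by
  -- first get a feasible x with few ones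
  have hx : ∃ x : Fin n → Bool, feasIP ω x ∧
      (Finset.univ.filter fun j => x j = true).card ≤ k := by
    by_contra hc
    push_neg at hc
    have hge : ((k+1 : ℕ) : ℝ≥0∞) ≤ valIP ω := by
      apply le_sInf
      rintro v ⟨x, hfx, rfl⟩
      exact_mod_cast hc x hfx
    have := hge.trans h
    have : (k+1 : ℕ) ≤ k := by exact_mod_cast this
    omega
  obtain ⟨x, hfx, hcard⟩ := hx
  obtain ⟨S, hsub, hScard⟩ := Finset.exists_superset_card_eq hcard
    (by simpa using hk)
  refine ⟨S, Finset.mem_powersetCard_univ.mpr hScard, ?_⟩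
  intro i
  calc (1:ℝ) ≤ ∑ j : Fin n, (if ω i j then (1:ℝ) else 0) * (if x j then (1:ℝ) else 0) := hfx i
    _ ≤ ∑ j : Fin n, (if ω i j then (1:ℝ) else 0) * (if decide (j ∈ S) then (1:ℝ) else 0) := by
        apply Finset.sum_le_sum
        intro j _
        by_cases hx' : x j = true
        · have hjS : j ∈ S := hsub (by simp [hx'])
          simp [hx', hjS]
        · have : x j = false := by simpa using hx'
          by_cases hω : ω i j = true <;> by_cases hjS : j ∈ S <;>
            simp [this, hω, hjS]

/-- `P(val_IP ≤ k) ≤ C(n,k) (1 - (1-p)^k)^m`. -/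
theorem stmt5 (m n : ℕ) (hm : 1 ≤ m) (hn : 1 ≤ n) (p : ℝ) (hp : 0 < p ∧ p ≤ 1)
    (k : ℕ) (hk : k ≤ n) :
    mProb m n p (fun ω => valIP ω ≤ (k : ℝ≥0∞)) ≤
      (n.choose k : ℝ) * (1 - (1 - p) ^ k) ^ m := by
  obtain ⟨hp0, hp1⟩ := hp
  have hp0' : 0 ≤ p := le_of_lt hp0
  calc mProb m n p (fun ω => valIP ω ≤ (k : ℝ≥0∞))
      ≤ mProb m n p (fun ω => ∃ S ∈ Finset.univ.powersetCard k,
          feasIP ω (fun j => decide (j ∈ S))) :=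
        mProb_mono hp0' hp1 fun ω h => valIP_le_imp ω k hk h
    _ ≤ ∑ S ∈ Finset.univ.powersetCard k,
          mProb m n p (fun ω => feasIP ω (fun j => decide (j ∈ S))) :=
        mProb_union hp0' hp1 _ _
    _ = ∑ S ∈ Finset.univ.powersetCard k, (1 - (1 - p) ^ k) ^ m := by
        apply Finset.sum_congr rfl
        intro S hS
        have hScard : S.card = k := (Finset.mem_powersetCard_univ.mp hS)
        have hiff : ∀ ω : Fin m → Fin n → Bool,
            (feasIP ω (fun j => decide (j ∈ S))) ↔ (∀ i : Fin m, ∃ j ∈ S, ω i j = true) :=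
          fun ω => feas_ind_iff ω S
        have : mProb m n p (fun ω => feasIP ω (fun j => decide (j ∈ S)))
            = mProb m n p (fun ω => ∀ i : Fin m, ∃ j ∈ S, ω i j = true) := by
          unfold mProb
          apply Finset.sum_congr rfl
          intro ω _
          by_cases h : feasIP ω (fun j => decide (j ∈ S))
          · rw [if_pos h, if_pos ((hiff ω).mp h)]
          · rw [if_neg h, if_neg (fun hc => h ((hiff ω).mpr hc))]
        rw [this, prob_S, hScard]
    _ = (n.choose k : ℝ) * (1 - (1 - p) ^ k) ^ m := by
        rw [Finset.sum_const, Finset.card_powersetCard, Finset.card_univ, Fintype.card_fin,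
          nsmul_eq_mul]
end

section
/- In the asymptotic Bernoulli setting, assume m(n)·p(n)/log n → 0 as n → ∞ (sparse regime) and that log( log n / (m·p) ) / log n → 0. Let X_1, …, X_n be i.i.d. Binomial(m,p), and set g_n := log n / log( log n / (m·p) ). Then there exist constants c₁, c₂ > 0 such that for all sufficiently large n, c₁·g_n ≤ E[ max_{i∈[n]} X_i ] ≤ c₂·g_n. -/
/-
Write `R = log n`, `λ = mp = R e^{-L}` (so `L = log (R / λ)`) and `g = R / L`; the hypotheses make
`L → ∞`, `L = o(R)` and `m ≥ R` eventually.

Upper bound: `P(X₁ ≥ t) ≤ ∑_{s ≥ t} (e λ / s)^s`, and for `s > 4g` the ratio `e λ / s` is at most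
`L e^{-L} ≤ e^{-L/2}`. A union bound gives `P(max ≥ t) ≤ 2n e^{-tL/2}`, whose sum over `t > 4g` is
at most `1` because `n = e^R = e^{gL}`; hence `E[max] ≤ 4g + 2`.

Lower bound: for `k = ⌈g/4⌉`, `P(X₁ ≥ k) ≥ (λ/2k)^k e^{-2λ} ≥ e^{-kL - 2λ} ≥ 1/n`, so
`P(max ≥ k) ≥ 1 - (1 - 1/n)^n ≥ 1/2` and `E[max] ≥ k/2 ≥ g/8`.
-/

open Classical Finset

/-- Probability weight of `n` independent rows of `m` i.i.d. Bernoulli(p) trials;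
row `i` realizes the Binomial(m,p) variable `X i`. -/
noncomputable def bWeight (n m : ℕ) (p : ℝ) (ω : Fin n → Fin m → Bool) : ℝ :=
  ∏ i : Fin n, ∏ j : Fin m, if ω i j then p else 1 - p

/-- Probability of an event for `n` i.i.d. Binomial(m,p) variables. -/
noncomputable def bProb (n m : ℕ) (p : ℝ) (P : (Fin n → Fin m → Bool) → Prop) : ℝ :=
  ∑ ω : Fin n → Fin m → Bool, if P ω then bWeight n m p ω else 0

/-- `X i`: the `i`-th Binomial(m,p) variable (number of successes in row `i`). -/
def Xvar {n m : ℕ} (ω : Fin n → Fin m → Bool) (i : Fin n) : ℕ :=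
  (Finset.univ.filter fun j : Fin m => ω i j = true).card

/-- `max_{i ∈ [n]} X_i`. -/
def maxX {n m : ℕ} (ω : Fin n → Fin m → Bool) : ℕ :=
  Finset.univ.sup (Xvar ω)

/-- `E[max_{i ∈ [n]} X_i]` for `n` i.i.d. Binomial(m,p) variables. -/
noncomputable def expMax (n m : ℕ) (p : ℝ) : ℝ :=
  ∑ ω : Fin n → Fin m → Bool, bWeight n m p ω * (maxX ω : ℝ)

open Filter

open Real

section Bernoulli

variable {n m : ℕ} {p : ℝ}

-- `bWeight n m p ω` is definitionally `∏ i, rowWeight m p (ω i)`.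
noncomputable def rowWeight (m : ℕ) (p : ℝ) (f : Fin m → Bool) : ℝ :=
  ∏ j : Fin m, if f j then p else 1 - p

def numSuccesses {m : ℕ} (f : Fin m → Bool) : ℕ := #{j | f j = true}

noncomputable def binomTail (m : ℕ) (p : ℝ) (k : ℕ) : ℝ :=
  ∑ s ∈ Icc k m, (m.choose s : ℝ) * p ^ s * (1 - p) ^ (m - s)

def funBoolEquivFinset (α : Type*) [Fintype α] [DecidableEq α] : (α → Bool) ≃ Finset α where
  toFun f := {a | f a = true}
  invFun s a := decide (a ∈ s)
  left_inv f := by ext a; simp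
  right_inv s := by ext a; simp

lemma rowWeight_nonneg (hp0 : 0 ≤ p) (hp1 : p ≤ 1) (f : Fin m → Bool) : 0 ≤ rowWeight m p f :=
  prod_nonneg fun _ _ => by split <;> linarith

lemma bWeight_nonneg (hp0 : 0 ≤ p) (hp1 : p ≤ 1) (ω : Fin n → Fin m → Bool) :
    0 ≤ bWeight n m p ω :=
  prod_nonneg fun i _ => rowWeight_nonneg hp0 hp1 (ω i)

lemma sum_rowWeight_mul_numSuccesses (φ : ℕ → ℝ) :
    ∑ f : Fin m → Bool, rowWeight m p f * φ (numSuccesses f) =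
      ∑ s ∈ range (m + 1), (m.choose s : ℝ) * p ^ s * (1 - p) ^ (m - s) * φ s := by
  rw [← (funBoolEquivFinset (Fin m)).symm.sum_comp]
  have hweight (s : Finset (Fin m)) :
      rowWeight m p ((funBoolEquivFinset (Fin m)).symm s) = p ^ #s * (1 - p) ^ (m - #s) := by
    simp only [rowWeight, funBoolEquivFinset, Equiv.coe_fn_symm_mk, decide_eq_true_eq]
    rw [prod_ite, prod_const, prod_const, filter_mem_eq_of_subset (subset_univ s),
      filter_notMem_eq_sdiff, card_univ_sdiff, Fintype.card_fin]
  have hcount (s : Finset (Fin m)) : numSuccesses ((funBoolEquivFinset (Fin m)).symm s) = #s := by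
    simp [numSuccesses, funBoolEquivFinset]
  simp only [hweight, hcount]
  rw [← powerset_univ, sum_powerset_apply_card (fun k => p ^ k * (1 - p) ^ (m - k) * φ k),
    card_univ, Fintype.card_fin]
  simp only [nsmul_eq_mul]
  exact sum_congr rfl fun s _ => by ring

lemma sum_binomial_terms (m : ℕ) (p : ℝ) :
    ∑ s ∈ range (m + 1), (m.choose s : ℝ) * p ^ s * (1 - p) ^ (m - s) = 1 := by
  have h := (add_pow p (1 - p) m).symm
  rw [add_sub_cancel, one_pow] at h
  exact Eq.trans (sum_congr rfl fun s _ => by ring) h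

lemma sum_rowWeight (m : ℕ) (p : ℝ) : ∑ f : Fin m → Bool, rowWeight m p f = 1 := by
  simpa [sum_binomial_terms] using sum_rowWeight_mul_numSuccesses (m := m) (p := p) (fun _ => 1)

lemma sum_bWeight_mul_prod (φ : (Fin m → Bool) → ℝ) :
    ∑ ω : Fin n → Fin m → Bool, bWeight n m p ω * ∏ i, φ (ω i) =
      (∑ f : Fin m → Bool, rowWeight m p f * φ f) ^ n := by
  rw [← Fin.prod_const, Fintype.prod_sum]
  exact sum_congr rfl fun ω _ => prod_mul_distrib.symm

lemma sum_bWeight (n m : ℕ) (p : ℝ) : ∑ ω : Fin n → Fin m → Bool, bWeight n m p ω = 1 := by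
  simpa [sum_rowWeight] using sum_bWeight_mul_prod (n := n) (m := m) (p := p) (fun _ => 1)

lemma sum_rowWeight_mul_numSuccesses_lt (k : ℕ) :
    ∑ f : Fin m → Bool, rowWeight m p f * (if numSuccesses f < k then 1 else 0) =
      1 - binomTail m p k := by
  have hIcc : Icc k m = {s ∈ range (m + 1) | k ≤ s} := by ext; simp; omega
  rw [sum_rowWeight_mul_numSuccesses (fun s => if s < k then 1 else 0), eq_sub_iff_add_eq,
    binomTail, hIcc, sum_filter, ← sum_add_distrib]
  refine Eq.trans (sum_congr rfl fun s _ => ?_) (sum_binomial_terms m p)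
  split_ifs <;> first | omega | ring

lemma binomTail_le_one (hp0 : 0 ≤ p) (hp1 : p ≤ 1) (k : ℕ) : binomTail m p k ≤ 1 := by
  have hlt := sum_rowWeight_mul_numSuccesses_lt (m := m) (p := p) k
  have : 0 ≤ ∑ f : Fin m → Bool, rowWeight m p f * (if numSuccesses f < k then 1 else 0) :=
    sum_nonneg fun f _ => mul_nonneg (rowWeight_nonneg hp0 hp1 f) (by positivity)
  linarith

lemma le_binomTail (hp0 : 0 ≤ p) (hp1 : p ≤ 1) {k : ℕ} (hk : k ≤ m) :
    (m.choose k : ℝ) * p ^ k * (1 - p) ^ (m - k) ≤ binomTail m p k := by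
  have : 0 ≤ 1 - p := by linarith
  exact single_le_sum (f := fun s => (m.choose s : ℝ) * p ^ s * (1 - p) ^ (m - s))
    (fun s _ => by positivity) (mem_Icc.2 ⟨le_rfl, hk⟩)

-- `bProb` decides its event classically; this restates it for any decidability instance.
lemma bProb_eq_sum (P : (Fin n → Fin m → Bool) → Prop) [DecidablePred P] :
    bProb n m p P = ∑ ω, if P ω then bWeight n m p ω else 0 := by
  unfold bProb; congr! 2

lemma maxX_le (ω : Fin n → Fin m → Bool) : maxX ω ≤ m :=
  Finset.sup_le fun _ _ => (card_filter_le _ _).trans (by simp)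

lemma maxX_lt_iff {ω : Fin n → Fin m → Bool} {k : ℕ} (hk : 0 < k) :
    maxX ω < k ↔ ∀ i, numSuccesses (ω i) < k := by
  rw [maxX, Finset.sup_lt_iff (show ⊥ < k from hk)]
  simp [Xvar, numSuccesses]

lemma bProb_le_maxX_eq {k : ℕ} (hk : 0 < k) :
    bProb n m p (fun ω => k ≤ maxX ω) = 1 - (1 - binomTail m p k) ^ n := by
  have hpoint (ω : Fin n → Fin m → Bool) : (if k ≤ maxX ω then bWeight n m p ω else 0) =
      bWeight n m p ω - bWeight n m p ω * ∏ i, (if numSuccesses (ω i) < k then 1 else 0) := by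
    rw [prod_boole]
    by_cases h : maxX ω < k
    · simp [not_le.2 h, (maxX_lt_iff hk).1 h]
    · simp [not_lt.1 h, mt (maxX_lt_iff hk).2 h]
  rw [bProb_eq_sum, sum_congr rfl fun ω _ => hpoint ω, sum_sub_distrib, sum_bWeight,
    sum_bWeight_mul_prod (fun f => if numSuccesses f < k then 1 else 0),
    sum_rowWeight_mul_numSuccesses_lt]

lemma bProb_le_maxX_le (hp0 : 0 ≤ p) (hp1 : p ≤ 1) {k : ℕ} (hk : 0 < k) :
    bProb n m p (fun ω => k ≤ maxX ω) ≤ n * binomTail m p k := by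
  have hbernoulli := one_add_mul_le_pow (a := -binomTail m p k)
    (by linarith [binomTail_le_one (m := m) hp0 hp1 k]) n
  rw [← sub_eq_add_neg] at hbernoulli
  rw [bProb_le_maxX_eq hk]
  linarith

lemma half_le_bProb_le_maxX (hp0 : 0 ≤ p) (hp1 : p ≤ 1) {k : ℕ} (hk : 0 < k)
    (h : 1 ≤ n * binomTail m p k) : 1 / 2 ≤ bProb n m p (fun ω => k ≤ maxX ω) := by
  have hpow : (1 - binomTail m p k) ^ n ≤ exp (-1) :=
    calc (1 - binomTail m p k) ^ n ≤ exp (-binomTail m p k) ^ n :=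
          pow_le_pow_left₀ (by linarith [binomTail_le_one (m := m) hp0 hp1 k])
            (one_sub_le_exp_neg _) n
      _ = exp (-(n * binomTail m p k)) := by rw [← exp_nat_mul]; ring_nf
      _ ≤ exp (-1) := exp_le_exp.2 (by linarith)
  rw [bProb_le_maxX_eq hk]
  linarith [exp_neg_one_lt_half]

lemma mul_bProb_le_expMax (hp0 : 0 ≤ p) (hp1 : p ≤ 1) (k : ℕ) :
    k * bProb n m p (fun ω => k ≤ maxX ω) ≤ expMax n m p := by
  rw [bProb_eq_sum, mul_sum, expMax]
  refine sum_le_sum fun ω _ => ?_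
  split_ifs with h
  · rw [mul_comm]
    exact mul_le_mul_of_nonneg_left (by exact_mod_cast h) (bWeight_nonneg hp0 hp1 ω)
  · rw [mul_zero]
    exact mul_nonneg (bWeight_nonneg hp0 hp1 ω) (by positivity)

lemma expMax_le_add_sum_bProb (hp0 : 0 ≤ p) (hp1 : p ≤ 1) (K : ℕ) :
    expMax n m p ≤ K + ∑ t ∈ Icc (K + 1) m, bProb n m p (fun ω => t ≤ maxX ω) := by
  have hpoint (ω : Fin n → Fin m → Bool) :
      (maxX ω : ℝ) ≤ K + ∑ t ∈ Icc (K + 1) m, if t ≤ maxX ω then 1 else 0 := by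
    have : {t ∈ Icc (K + 1) m | t ≤ maxX ω} = Icc (K + 1) (maxX ω) := by
      ext t; simp only [mem_filter, mem_Icc]; have := maxX_le ω; omega
    rw [← sum_filter, this, sum_const, Nat.card_Icc, nsmul_one]
    exact_mod_cast (by omega : maxX ω ≤ K + (maxX ω + 1 - (K + 1)))
  calc expMax n m p
      ≤ ∑ ω, bWeight n m p ω * (K + ∑ t ∈ Icc (K + 1) m, if t ≤ maxX ω then 1 else 0) :=
        sum_le_sum fun ω _ => mul_le_mul_of_nonneg_left (hpoint ω) (bWeight_nonneg hp0 hp1 ω)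
    _ = K + ∑ t ∈ Icc (K + 1) m, bProb n m p (fun ω => t ≤ maxX ω) := by
        simp only [mul_add, sum_add_distrib, ← sum_mul, sum_bWeight, one_mul, mul_sum,
          bProb_eq_sum]
        rw [sum_comm]
        simp

end Bernoulli

lemma choose_mul_pow_le (m s : ℕ) {p : ℝ} (hp : 0 ≤ p) :
    (m.choose s : ℝ) * p ^ s ≤ (exp 1 * m * p / s) ^ s := by
  rcases s.eq_zero_or_pos with rfl | hs
  · simp
  have hs' : (0 : ℝ) < (s : ℝ) ^ s := by positivity
  have hfact : (s : ℝ) ^ s ≤ exp 1 ^ s * s.factorial := by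
    rw [← exp_nat_mul, mul_one, ← div_le_iff₀ (by positivity)]
    exact pow_div_factorial_le_exp _ (by positivity) s
  calc (m.choose s : ℝ) * p ^ s ≤ (m : ℝ) ^ s / s.factorial * p ^ s := by
        gcongr; exact Nat.choose_le_pow_div s m
    _ ≤ (m : ℝ) ^ s * exp 1 ^ s / s ^ s * p ^ s := by
        refine mul_le_mul_of_nonneg_right ?_ (pow_nonneg hp s)
        rw [div_le_div_iff₀ (by positivity) hs']
        nlinarith [pow_nonneg (Nat.cast_nonneg (α := ℝ) m) s]
    _ = (exp 1 * m * p / s) ^ s := by rw [div_pow, mul_pow, mul_pow]; ring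

lemma div_pow_le_choose {m k : ℕ} (h : 2 * k ≤ m) : ((m : ℝ) / (2 * k)) ^ k ≤ m.choose k := by
  have hhalf : (m : ℝ) / 2 ≤ ((m + 1 - k : ℕ) : ℝ) := by
    rw [Nat.cast_sub (by omega)]; push_cast
    have : (2 * k : ℝ) ≤ m := by exact_mod_cast h
    linarith
  calc ((m : ℝ) / (2 * k)) ^ k = ((m : ℝ) / 2) ^ k / (k : ℝ) ^ k := by
        rw [← div_pow, div_div, mul_comm]
    _ ≤ ((m : ℝ) / 2) ^ k / k.factorial :=
        div_le_div_of_nonneg_left (by positivity) (by exact_mod_cast k.factorial_pos)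
          (by exact_mod_cast k.factorial_le_pow)
    _ ≤ ((m + 1 - k : ℕ) : ℝ) ^ k / k.factorial := by gcongr
    _ ≤ m.choose k := Nat.pow_le_choose k m

lemma sum_Icc_pow_le {β : ℝ} (hβ0 : 0 ≤ β) (hβ : β ≤ 1 / 2) (t M : ℕ) :
    ∑ s ∈ Icc t M, β ^ s ≤ 2 * β ^ t := by
  rw [← Ico_add_one_right_eq_Icc]
  refine (geom_sum_Ico_le_of_lt_one hβ0 (by linarith)).trans ?_
  rw [div_le_iff₀ (by linarith)]
  nlinarith [pow_nonneg hβ0 t]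

lemma exp_neg_two_mul_le_one_sub {p : ℝ} (hp0 : 0 ≤ p) (hp : p ≤ 1 / 2) :
    exp (-(2 * p)) ≤ 1 - p := by
  rw [exp_neg, inv_le_iff_one_le_mul₀ (exp_pos _)]
  nlinarith [add_one_le_exp (2 * p)]

lemma mul_exp_neg_le_exp_neg_half (x : ℝ) : x * exp (-x) ≤ exp (-(x / 2)) := by
  have hx : x ≤ exp (x / 2) := by
    rcases le_total x 0 with hx | hx
    · exact hx.trans (exp_pos _).le
    · nlinarith [quadratic_le_exp_of_nonneg (x := x / 2) (by linarith)]
  calc x * exp (-x) ≤ exp (x / 2) * exp (-x) := by gcongr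
    _ = exp (-(x / 2)) := by rw [← exp_add]; ring_nf

lemma div_pow_mul_exp_le_binomial_term {m k : ℕ} {p : ℝ} (h : 2 * k ≤ m) (hp0 : 0 ≤ p)
    (hp : p ≤ 1 / 2) :
    (m * p / (2 * k)) ^ k * exp (-(2 * (m * p))) ≤ m.choose k * p ^ k * (1 - p) ^ (m - k) := by
  have hchoose : (m * p / (2 * k)) ^ k ≤ m.choose k * p ^ k := by
    rw [mul_div_right_comm, mul_pow]
    exact mul_le_mul_of_nonneg_right (div_pow_le_choose h) (pow_nonneg hp0 k)
  have hexp : exp (-(2 * (m * p))) ≤ (1 - p) ^ (m - k) :=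
    calc exp (-(2 * (m * p))) = exp (-(2 * p)) ^ m := by rw [← exp_nat_mul]; ring_nf
      _ ≤ (1 - p) ^ m := pow_le_pow_left₀ (exp_pos _).le (exp_neg_two_mul_le_one_sub hp0 hp) m
      _ ≤ (1 - p) ^ (m - k) := pow_le_pow_of_le_one (by linarith) (by linarith) (by omega)
  exact mul_le_mul hchoose hexp (exp_pos _).le (by positivity)

section Bounds

variable {n m : ℕ} {p L : ℝ}

lemma binomTail_le (hp0 : 0 ≤ p) (hp1 : p ≤ 1) {β : ℝ} (hβ0 : 0 ≤ β) (hβ : β ≤ 1 / 2) {t : ℕ}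
    (hratio : ∀ s, t ≤ s → exp 1 * m * p / s ≤ β) : binomTail m p t ≤ 2 * β ^ t := by
  refine (sum_le_sum fun s hs => ?_).trans (sum_Icc_pow_le hβ0 hβ t m)
  calc (m.choose s : ℝ) * p ^ s * (1 - p) ^ (m - s) ≤ (m.choose s : ℝ) * p ^ s :=
        mul_le_of_le_one_right (by positivity) (pow_le_one₀ (by linarith) (by linarith))
    _ ≤ (exp 1 * m * p / s) ^ s := choose_mul_pow_le m s hp0
    _ ≤ β ^ s := pow_le_pow_left₀ (by positivity) (hratio s (mem_Icc.1 hs).1) s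

lemma one_le_mul_binomTail (hp0 : 0 ≤ p) (hp : p ≤ 1 / 2) (hn : 0 < n) {k : ℕ} (h2k : 2 * k ≤ m)
    (hbase : exp (-L) ≤ m * p / (2 * k)) (hexponent : k * L + 2 * (m * p) ≤ log n) :
    1 ≤ n * binomTail m p k :=
  calc (1 : ℝ) = n * exp (-log n) := by
        rw [exp_neg, exp_log (by exact_mod_cast hn), mul_inv_cancel₀ (by positivity)]
    _ ≤ n * (exp (-L) ^ k * exp (-(2 * (m * p)))) := by
        rw [← exp_nat_mul, ← exp_add]
        gcongr
        linarith
    _ ≤ n * ((m * p / (2 * k)) ^ k * exp (-(2 * (m * p)))) := by gcongr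
    _ ≤ n * binomTail m p k := by
        gcongr
        exact (div_pow_mul_exp_le_binomial_term h2k hp0 hp).trans
          (le_binomTail hp0 (by linarith) (by omega))

lemma expMax_le_of_ratio_le (hp0 : 0 ≤ p) (hp1 : p ≤ 1) {β : ℝ} (hβ0 : 0 ≤ β) (hβ : β ≤ 1 / 2)
    (K : ℕ) (hratio : ∀ s, K < s → exp 1 * m * p / s ≤ β) :
    expMax n m p ≤ K + 4 * n * β ^ (K + 1) := by
  have hterm : ∀ t ∈ Icc (K + 1) m, bProb n m p (fun ω => t ≤ maxX ω) ≤ 2 * n * β ^ t := by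
    intro t ht
    have hKt : K < t := (mem_Icc.1 ht).1
    calc bProb n m p (fun ω => t ≤ maxX ω) ≤ n * binomTail m p t :=
          bProb_le_maxX_le hp0 hp1 (by omega)
      _ ≤ n * (2 * β ^ t) := by
          gcongr
          exact binomTail_le hp0 hp1 hβ0 hβ fun s hs => hratio s (by omega)
      _ = 2 * n * β ^ t := by ring
  calc expMax n m p ≤ K + ∑ t ∈ Icc (K + 1) m, bProb n m p (fun ω => t ≤ maxX ω) :=
        expMax_le_add_sum_bProb hp0 hp1 K
    _ ≤ K + ∑ t ∈ Icc (K + 1) m, 2 * n * β ^ t := by gcongr with t ht; exact hterm t ht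
    _ ≤ K + 4 * n * β ^ (K + 1) := by
        rw [← mul_sum]
        nlinarith [sum_Icc_pow_le hβ0 hβ (K + 1) m, (Nat.cast_nonneg n : (0 : ℝ) ≤ n)]

lemma half_mul_le_expMax (hp0 : 0 ≤ p) (hp1 : p ≤ 1) {k : ℕ} (hk : 0 < k)
    (h : 1 ≤ n * binomTail m p k) : k / 2 ≤ expMax n m p := by
  have := half_le_bProb_le_maxX hp0 hp1 hk h
  have := mul_bProb_le_expMax (n := n) (m := m) hp0 hp1 k
  nlinarith [(Nat.cast_nonneg k : (0 : ℝ) ≤ k)]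

lemma expMax_le_of_regime (hp0 : 0 ≤ p) (hp1 : p ≤ 1) (hL : 16 ≤ L) (hLR : 16 * L ≤ log n)
    (hmp : m * p = log n * exp (-L)) : expMax n m p ≤ 5 * (log n / L) := by
  set R := log n
  have hR : 0 < R := by linarith
  have hn : (n : ℝ) = exp R := (exp_log (by linarith [(log_pos_iff n.cast_nonneg).1 hR])).symm
  set g := R / L
  have hgL : g * L = R := div_mul_cancel₀ R (by positivity)
  have hg : 16 ≤ g := by rw [le_div_iff₀ (by positivity)]; linarith
  set K := ⌈4 * g⌉₊
  have hK : 4 * g ≤ K := Nat.le_ceil _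
  have hK' : (K : ℝ) < 4 * g + 1 := Nat.ceil_lt_add_one (by positivity)
  set β := exp (-(L / 2))
  have hβ : β ≤ 1 / 2 := (exp_le_exp.2 (by linarith)).trans exp_neg_one_lt_half.le
  have hratio (s : ℕ) (hs : K < s) : exp 1 * m * p / s ≤ β := by
    have hs' : 4 * g ≤ s := hK.trans (by exact_mod_cast hs.le)
    calc exp 1 * m * p / s ≤ 4 * (m * p) / (4 * g) := by
          rw [mul_assoc]
          gcongr
          linarith [exp_one_lt_d9]
      _ = L * exp (-L) := by rw [hmp, ← hgL]; field_simp
      _ ≤ β := mul_exp_neg_le_exp_neg_half L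
  have hsmall : 4 * n * β ^ (K + 1) ≤ 1 := by
    have : β ^ (K + 1) ≤ exp (-(2 * R)) := by
      rw [← exp_nat_mul, exp_le_exp]; push_cast; nlinarith
    calc 4 * n * β ^ (K + 1) ≤ 4 * exp R * exp (-(2 * R)) := by rw [hn]; gcongr
      _ = 4 * exp (-R) := by rw [mul_assoc, ← exp_add]; ring_nf
      _ ≤ 1 := by
          rw [exp_neg, ← div_eq_mul_inv, div_le_one (exp_pos R)]
          linarith [add_one_le_exp R]
  calc expMax n m p ≤ K + 4 * n * β ^ (K + 1) :=
        expMax_le_of_ratio_le hp0 hp1 (exp_pos _).le hβ K hratio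
    _ ≤ 5 * g := by linarith

lemma le_expMax_of_regime (hp0 : 0 ≤ p) (hp : p ≤ 1 / 2) (hm : log n ≤ m) (hL : 16 ≤ L)
    (hLR : 16 * L ≤ log n) (hmp : m * p = log n * exp (-L)) :
    log n / L ≤ 8 * expMax n m p := by
  set R := log n
  have hR : 0 < R := by linarith
  have hn : 0 < n := by exact_mod_cast (zero_lt_one.trans ((log_pos_iff n.cast_nonneg).1 hR))
  set g := R / L
  have hgL : g * L = R := div_mul_cancel₀ R (by positivity)
  have hg : 16 ≤ g := by rw [le_div_iff₀ (by positivity)]; linarith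
  have hgR : g ≤ R := div_le_self hR.le (by linarith)
  set k := ⌈g / 4⌉₊
  have hk : g / 4 ≤ k := Nat.le_ceil _
  have hk' : (k : ℝ) < g / 4 + 1 := Nat.ceil_lt_add_one (by positivity)
  have h2k : 2 * k ≤ m := by
    have : (2 * k : ℝ) ≤ m := by linarith
    exact_mod_cast this
  have hbase : exp (-L) ≤ m * p / (2 * k) :=
    calc exp (-L) ≤ L * exp (-L) := le_mul_of_one_le_left (exp_pos _).le (by linarith)
      _ = m * p / g := by rw [hmp, ← hgL]; field_simp
      _ ≤ m * p / (2 * k) := by gcongr; linarith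
  have hexponent : k * L + 2 * (m * p) ≤ R := by
    have : exp (-L) ≤ 1 / 16 := by
      rw [exp_neg, inv_le_comm₀ (exp_pos L) (by norm_num)]
      linarith [add_one_le_exp L]
    rw [hmp]
    nlinarith
  have := half_mul_le_expMax hp0 (by linarith) (Nat.ceil_pos.2 (by positivity))
    (one_le_mul_binomTail hp0 hp hn h2k hbase hexponent)
  linarith

end Bounds

lemma tendsto_div_atTop_of_tendsto_div_zero {α : Type*} {l : Filter α} {a b : α → ℝ}
    (h : Tendsto (fun x => a x / b x) l (nhds 0)) (hpos : ∀ᶠ x in l, 0 < a x / b x) :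
    Tendsto (fun x => b x / a x) l atTop :=
  (tendsto_nhdsWithin_iff.2 ⟨h, hpos⟩).inv_tendsto_nhdsGT_zero.congr fun _ => inv_div _ _

lemma eventually_log_le_of_rpow_le {m : ℕ → ℕ} {c : ℝ} (hc : 0 < c)
    (hm : ∀ᶠ n : ℕ in atTop, c * (n : ℝ) ^ c ≤ m n) : ∀ᶠ n : ℕ in atTop, log n ≤ m n := by
  have hlog := tendsto_natCast_atTop_atTop.eventually ((isLittleO_log_rpow_atTop hc).bound hc)
  filter_upwards [hlog, hm] with n hlog hm
  rw [norm_of_nonneg (rpow_nonneg n.cast_nonneg c)] at hlog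
  exact (le_abs_self _).trans (hlog.trans hm)

lemma eventually_sparse_regime {m : ℕ → ℕ} {p : ℕ → ℝ} (hp : ∀ᶠ n : ℕ in atTop, 0 < p n)
    (hm : ∀ᶠ n : ℕ in atTop, log n ≤ m n)
    (hsparse : Tendsto (fun n : ℕ => (m n : ℝ) * p n / log n) atTop (nhds 0))
    (hlog : Tendsto (fun n : ℕ => log (log n / ((m n : ℝ) * p n)) / log n) atTop (nhds 0)) :
    ∀ᶠ n : ℕ in atTop, 16 ≤ log (log n / ((m n : ℝ) * p n)) ∧
      16 * log (log n / ((m n : ℝ) * p n)) ≤ log n := by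
  have hlog_pos : ∀ᶠ n : ℕ in atTop, 0 < log n :=
    (tendsto_log_atTop.comp tendsto_natCast_atTop_atTop).eventually_gt_atTop 0
  have hL : Tendsto (fun n : ℕ => log (log n / ((m n : ℝ) * p n))) atTop atTop := by
    refine tendsto_log_atTop.comp (tendsto_div_atTop_of_tendsto_div_zero hsparse ?_)
    filter_upwards [hp, hm, hlog_pos] with n hp hm hlog
    exact div_pos (mul_pos (by linarith) hp) hlog
  filter_upwards [hL.eventually_ge_atTop 16,
    hlog.eventually_le_const (by norm_num : (0 : ℝ) < 1 / 16), hlog_pos] with n hL16 h h0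
  rw [div_le_iff₀ h0] at h
  exact ⟨hL16, by linarith⟩

theorem stmt10_general (m : ℕ → ℕ) (p : ℕ → ℝ) (δ : ℝ)
    (hm : ∃ c C : ℝ, 0 < c ∧ 0 < C ∧ ∃ N : ℕ, ∀ n ≥ N,
      c * (n : ℝ) ^ c ≤ (m n : ℝ) ∧ (m n : ℝ) ≤ C * (n : ℝ) ^ C)
    (hp : ∃ N : ℕ, ∀ n ≥ N, (n : ℝ) ^ (-δ) ≤ p n ∧ p n ≤ 1 / 2)
    (hsparse : Tendsto (fun n : ℕ => (m n : ℝ) * p n / Real.log n) atTop (nhds 0))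
    (hlog : Tendsto (fun n : ℕ => Real.log (Real.log n / ((m n : ℝ) * p n)) / Real.log n)
      atTop (nhds 0)) :
    ∃ c₁ c₂ : ℝ, 0 < c₁ ∧ 0 < c₂ ∧ ∃ N : ℕ, ∀ n ≥ N,
      c₁ * (Real.log n / Real.log (Real.log n / ((m n : ℝ) * p n))) ≤ expMax n (m n) (p n) ∧
      expMax n (m n) (p n) ≤
        c₂ * (Real.log n / Real.log (Real.log n / ((m n : ℝ) * p n))) := by
  obtain ⟨c, _, hc, _, Nm, hNm⟩ := hm
  obtain ⟨Np, hNp⟩ := hp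
  have hp' : ∀ᶠ n : ℕ in atTop, 0 < p n ∧ p n ≤ 1 / 2 := by
    filter_upwards [eventually_ge_atTop (max Np 1)] with n hn
    have hn1 : (0 : ℝ) < n := by exact_mod_cast le_of_max_le_right hn
    have := hNp n (le_of_max_le_left hn)
    exact ⟨(rpow_pos_of_pos hn1 _).trans_le this.1, this.2⟩
  have hm' : ∀ᶠ n : ℕ in atTop, log n ≤ m n :=
    eventually_log_le_of_rpow_le hc (eventually_atTop.2 ⟨Nm, fun n hn => (hNm n hn).1⟩)
  obtain ⟨N, hN⟩ := eventually_atTop.1 (hp'.and (hm'.and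
    (eventually_sparse_regime (hp'.mono fun _ h => h.1) hm' hsparse hlog)))
  refine ⟨1 / 8, 5, by norm_num, by norm_num, N, fun n hn => ?_⟩
  obtain ⟨⟨hp0, hp2⟩, hm, hL, hLR⟩ := hN n hn
  have hmp : (m n : ℝ) * p n = log n * exp (-log (log n / ((m n : ℝ) * p n))) := by
    have hlogn : 0 < log n := by linarith
    rw [exp_neg, exp_log (div_pos hlogn (mul_pos (by linarith) hp0)), inv_div]
    field_simp
  refine ⟨?_, expMax_le_of_regime hp0.le (by linarith) hL hLR hmp⟩
  linarith [le_expMax_of_regime hp0.le hp2 hm hL hLR hmp]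

/-- In the sparse regime (`mp / log n → 0`, with
`log(log n/(mp)) / log n → 0`), setting `g_n = log n / log(log n/(mp))`, the expected
maximum of `n` i.i.d. Binomial(m,p) variables satisfies `c₁ g_n ≤ E[max_i X_i] ≤ c₂ g_n`
for large `n`. -/
theorem stmt10 (m : ℕ → ℕ) (p : ℕ → ℝ) (δ : ℝ)
    (hδ : 0 < δ ∧ δ < 1)
    (hp0 : ∀ n, 0 < p n ∧ p n ≤ 1)
    (hm : ∃ c C : ℝ, 0 < c ∧ 0 < C ∧ ∃ N : ℕ, ∀ n ≥ N,
      c * (n : ℝ) ^ c ≤ (m n : ℝ) ∧ (m n : ℝ) ≤ C * (n : ℝ) ^ C)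
    (hp : ∃ N : ℕ, ∀ n ≥ N, (n : ℝ) ^ (-δ) ≤ p n ∧ p n ≤ 1 / 2)
    (hsparse : Tendsto (fun n : ℕ => (m n : ℝ) * p n / Real.log n) atTop (nhds 0))
    (hlog : Tendsto (fun n : ℕ => Real.log (Real.log n / ((m n : ℝ) * p n)) / Real.log n)
      atTop (nhds 0)) :
    ∃ c₁ c₂ : ℝ, 0 < c₁ ∧ 0 < c₂ ∧ ∃ N : ℕ, ∀ n ≥ N,
      c₁ * (Real.log n / Real.log (Real.log n / ((m n : ℝ) * p n))) ≤ expMax n (m n) (p n) ∧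
      expMax n (m n) (p n) ≤
        c₂ * (Real.log n / Real.log (Real.log n / ((m n : ℝ) * p n))) :=
  stmt10_general m p δ hm hp hsparse hlog
end
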